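/- Let (Ω, 𝒜, P) be a probability space, X, Y : Ω → ℝ random variables, h : ℝ → ℝ Borel measurable, and φ : [−1,1] → ℝ convex. If Y and X are conditionally independent given h(X), then ∫_{ℝ×ℝ} ∫_ℝ φ(F_{Y|h(X)=z₁}(y) − F_{Y|h(X)=z₂}(y)) dP^Y(y) d(P^{h(X)} ⊗ P^{h(X)})(z₁,z₂) = ∫_{ℝ×ℝ} ∫_ℝ φ(F_{Y|X=x₁}(y) − F_{Y|X=x₂}(y)) dP^Y(y) d(P^X ⊗ P^X)(x₁,x₂) (self-equitability). -/

import Mathlib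

open MeasureTheory ProbabilityTheory Set
open scoped ENNReal

/-! Conditional independence of `Y` and `X` given `h(X)` makes `x ↦ κh (h x)` a second
disintegration of the law of `(X, Y)` along `P^X`: on a rectangle `C × B`, pulling `1_C(X)` out of
the conditional expectation turns `P(X ∈ C, Y ∈ B)` into `∫_{X ∈ C} κh(h(X), B) dP`. By uniqueness
of disintegrations `κ x = κh (h x)` for `P^X`-a.e. `x`, so the integrand on the right is the
pull-back along `h × h` of the integrand on the left, while `P^{h(X)} ⊗ P^{h(X)}` is the
push-forward of `P^X ⊗ P^X` under `h × h`. To integrate, `φ` is replaced by a measurable function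
agreeing with it on `[-1, 1]`, where the CDF differences live; a convex function is continuous on
the open interval. -/

theorem ConvexOn.exists_measurable_eqOn_Icc {a b : ℝ} {φ : ℝ → ℝ} (hφ : ConvexOn ℝ (Icc a b) φ) :
    ∃ ψ : ℝ → ℝ, Measurable ψ ∧ EqOn φ ψ (Icc a b) := by
  classical
  refine ⟨(Ioo a b).piecewise φ (fun t => if t ≤ a then φ a else φ b), ?_, ?_⟩
  · refine measurable_of_restrict_of_restrict_compl (s := Ioo a b) measurableSet_Ioo ?_ ?_
    · rw [domRestrict_piecewise]
      have hcont : ContinuousOn φ (Ioo a b) := by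
        simpa only [interior_Icc] using hφ.continuousOn_interior
      exact hcont.domRestrict.measurable
    · rw [domRestrict_piecewise_compl]
      exact (Measurable.ite measurableSet_Iic measurable_const measurable_const).comp
        measurable_subtype_coe
  · rintro t ⟨hat, htb⟩
    by_cases ht : t ∈ Ioo a b
    · simp [piecewise_eq_of_mem _ _ _ ht]
    · rw [piecewise_eq_of_notMem _ _ _ ht]
      rcases hat.eq_or_lt with rfl | hat
      · simp
      · obtain rfl : t = b := htb.antisymm (not_lt.mp fun htb' => ht ⟨hat, htb'⟩)
        simp [hat.not_ge]

lemma measureReal_sub_measureReal_mem_Icc {α : Type*} [MeasurableSpace α] (μ ν : Measure α)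
    [IsProbabilityMeasure μ] [IsProbabilityMeasure ν] (s t : Set α) :
    μ.real s - ν.real t ∈ Icc (-1 : ℝ) 1 :=
  ⟨by linarith [measureReal_nonneg (μ := μ) (s := s), measureReal_le_one (μ := ν) (s := t)],
    by linarith [measureReal_le_one (μ := μ) (s := s), measureReal_nonneg (μ := ν) (s := t)]⟩

lemma ProbabilityTheory.Kernel.measurable_apply_Iic {α : Type*} [MeasurableSpace α]
    (κ : Kernel α ℝ) [IsSFiniteKernel κ] : Measurable fun p : α × ℝ => κ p.1 (Iic p.2) :=
  (κ.prodMkRight ℝ).measurable_kernel_prodMk_left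
    (measurableSet_le measurable_snd measurable_fst.snd)

lemma MeasureTheory.Measure.eq_compProd_of_apply_prod {α β : Type*} [MeasurableSpace α]
    [MeasurableSpace β] {ρ : Measure (α × β)} [IsFiniteMeasure ρ] {μ : Measure α} [SFinite μ]
    {κ : Kernel α β} [IsSFiniteKernel κ]
    (h : ∀ A B, MeasurableSet A → MeasurableSet B → ρ (A ×ˢ B) = ∫⁻ a in A, κ a B ∂μ) :
    ρ = μ ⊗ₘ κ :=
  Measure.ext_prod fun hA hB => by rw [h _ _ hA hB, Measure.compProd_apply_prod hA hB]

theorem integral_mul_eq_integral_condExp_mul {Ω : Type*} {m m₀ : MeasurableSpace Ω}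
    {μ : Measure[m₀] Ω} [IsFiniteMeasure μ] (hm : m ≤ m₀) {f g : Ω → ℝ}
    (hg : AEStronglyMeasurable g μ) {c : ℝ} (hg_bound : ∀ᵐ ω ∂μ, ‖g ω‖ ≤ c)
    (hfg : μ[fun ω => f ω * g ω | m] =ᵐ[μ] fun ω => (μ[f | m]) ω * (μ[g | m]) ω) :
    ∫ ω, f ω * g ω ∂μ = ∫ ω, (μ[f | m]) ω * g ω ∂μ := by
  have hg_int : Integrable g μ := .of_bound hg c hg_bound
  calc ∫ ω, f ω * g ω ∂μ = ∫ ω, (μ[f * g | m]) ω ∂μ := (integral_condExp hm).symm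
    _ = ∫ ω, (μ[f | m] * μ[g | m]) ω ∂μ := integral_congr_ae hfg
    _ = ∫ ω, (μ[μ[f | m] * g | m]) ω ∂μ :=
      integral_congr_ae (condExp_mul_of_stronglyMeasurable_left stronglyMeasurable_condExp
        (integrable_condExp.mul_bdd hg hg_bound) hg_int).symm
    _ = ∫ ω, (μ[f | m]) ω * g ω ∂μ := integral_condExp hm

lemma Set.indicator_const_comp {Ω β M : Type*} [Zero M] (Y : Ω → β) (B : Set β) (c : M) :
    (fun ω => B.indicator (fun _ => c) (Y ω)) = (Y ⁻¹' B).indicator fun _ => c := by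
  ext ω
  by_cases hω : Y ω ∈ B <;> simp [hω]

section Disintegration

variable {Ω α β γ : Type*} [MeasurableSpace Ω] {mα : MeasurableSpace α} [MeasurableSpace β]
  {mγ : MeasurableSpace γ} [StandardBorelSpace β] [Nonempty β] {P : Measure Ω} [IsFiniteMeasure P]

lemma measureReal_kernel_ae_eq_condExp {W : Ω → γ} {Y : Ω → β} (hW : Measurable W)
    (hY : Measurable Y) {κ : Kernel γ β} [IsFiniteKernel κ]
    (hκ : P.map (fun ω => (W ω, Y ω)) = P.map W ⊗ₘ κ)
    {B : Set β} (hB : MeasurableSet B) :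
    (fun ω => (κ (W ω)).real B) =ᵐ[P] P⟦Y ⁻¹' B | mγ.comap W⟧ := by
  filter_upwards [condDistrib_ae_eq_condExp hW hY hB,
    ae_of_ae_map hW.aemeasurable (condDistrib_ae_eq_of_measure_eq_compProd W hY.aemeasurable hκ)]
    with ω hcond hκω
  rw [← hcond, hκω]

lemma map_prodMk_eq_compProd_comap_of_condIndep {X : Ω → α} {Y : Ω → β} (hX : Measurable X)
    (hY : Measurable Y) {h : α → γ} (hh : Measurable h) {κh : Kernel γ β} [IsMarkovKernel κh]
    (hκh : P.map (fun ω => (h (X ω), Y ω)) = P.map (h ∘ X) ⊗ₘ κh)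
    (hCI : ∀ B C, MeasurableSet B → MeasurableSet C →
      P[fun ω => B.indicator (fun _ => (1 : ℝ)) (Y ω) * C.indicator (fun _ => (1 : ℝ)) (X ω)
        | mγ.comap (h ∘ X)]
      =ᵐ[P] fun ω => (P[fun ω' => B.indicator (fun _ => (1 : ℝ)) (Y ω') | mγ.comap (h ∘ X)]) ω *
        (P[fun ω' => C.indicator (fun _ => (1 : ℝ)) (X ω') | mγ.comap (h ∘ X)]) ω) :
    P.map (fun ω => (X ω, Y ω)) = P.map X ⊗ₘ κh.comap h hh := by
  have hhX : Measurable (h ∘ X) := hh.comp hX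
  refine Measure.eq_compProd_of_apply_prod fun C B hC hB => ?_
  rw [Measure.map_apply (hX.prodMk hY) (hC.prod hB), mk_preimage_prod,
    setLIntegral_map hC ((κh.comap h hh).measurable_coe hB) hX]
  simp only [Kernel.comap_apply]
  have hreal : P.real (X ⁻¹' C ∩ Y ⁻¹' B) = ∫ ω in X ⁻¹' C, (κh (h (X ω))).real B ∂P := by
    calc P.real (X ⁻¹' C ∩ Y ⁻¹' B)
        = ∫ ω, B.indicator (fun _ => (1 : ℝ)) (Y ω) * C.indicator (fun _ => (1 : ℝ)) (X ω) ∂P := by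
          rw [← integral_indicator_one ((hX hC).inter (hY hB))]
          congr 1 with ω
          by_cases hXω : X ω ∈ C <;> by_cases hYω : Y ω ∈ B <;> simp [hXω, hYω]
      _ = ∫ ω, (P⟦Y ⁻¹' B | mγ.comap (h ∘ X)⟧) ω * C.indicator (fun _ => (1 : ℝ)) (X ω) ∂P := by
          rw [integral_mul_eq_integral_condExp_mul hhX.comap_le
            (g := fun ω => C.indicator (fun _ => (1 : ℝ)) (X ω))
            ((measurable_const.indicator hC).comp hX).aestronglyMeasurable (c := 1)
            (ae_of_all _ fun ω => by by_cases hXω : X ω ∈ C <;> simp [hXω]) (hCI B C hB hC),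
            indicator_const_comp]
      _ = ∫ ω, (κh (h (X ω))).real B * C.indicator (fun _ => (1 : ℝ)) (X ω) ∂P :=
          integral_congr_ae <| by
            filter_upwards [measureReal_kernel_ae_eq_condExp hhX hY hκh hB] with ω hω
            rw [← hω]; rfl
      _ = ∫ ω in X ⁻¹' C, (κh (h (X ω))).real B ∂P := by
          rw [← integral_indicator (hX hC)]
          congr 1 with ω
          by_cases hXω : X ω ∈ C <;> simp [hXω]
  have hfin : ∫⁻ ω in X ⁻¹' C, κh (h (X ω)) B ∂P ≠ ∞ :=
    (setLIntegral_lt_top_of_le_nnreal (measure_ne_top _ _) ⟨1, fun _ _ => prob_le_one⟩).ne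
  simp only [measureReal_def] at hreal
  rw [integral_toReal (f := fun ω => κh (h (X ω)) B) ((κh.measurable_coe hB).comp hhX).aemeasurable
    (ae_of_all _ fun _ => measure_lt_top _ _)] at hreal
  exact (ENNReal.toReal_eq_toReal_iff' (measure_ne_top _ _) hfin).mp hreal

end Disintegration

section CdfGap

variable {α : Type*} [MeasurableSpace α]

noncomputable def cdfGapIntegral (ξ : Kernel α ℝ) (ν : Measure ℝ) (φ : ℝ → ℝ) (z : α × α) : ℝ :=
  ∫ y, φ ((ξ z.1 (Iic y)).toReal - (ξ z.2 (Iic y)).toReal) ∂ν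

variable {ξ η : Kernel α ℝ} {ν : Measure ℝ} {φ ψ : ℝ → ℝ}

lemma cdfGapIntegral_congr_of_eqOn [IsMarkovKernel ξ] (hφψ : EqOn φ ψ (Icc (-1) 1)) :
    cdfGapIntegral ξ ν φ = cdfGapIntegral ξ ν ψ :=
  funext fun z => integral_congr_ae <| ae_of_all _ fun _ =>
    hφψ (measureReal_sub_measureReal_mem_Icc (ξ z.1) (ξ z.2) _ _)

lemma stronglyMeasurable_cdfGapIntegral [IsSFiniteKernel ξ] [SFinite ν] (hψ : Measurable ψ) :
    StronglyMeasurable (cdfGapIntegral ξ ν ψ) := by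
  have hcdf := ξ.measurable_apply_Iic
  have hgap : Measurable fun p : (α × α) × ℝ =>
      ψ ((ξ p.1.1 (Iic p.2)).toReal - (ξ p.1.2 (Iic p.2)).toReal) :=
    hψ.comp ((hcdf.comp (measurable_fst.fst.prodMk measurable_snd)).ennreal_toReal.sub
      (hcdf.comp (measurable_fst.snd.prodMk measurable_snd)).ennreal_toReal)
  exact hgap.stronglyMeasurable.integral_prod_right'

lemma cdfGapIntegral_ae_congr {μ : Measure α} [SFinite μ] (hξη : ξ =ᵐ[μ] η) :
    cdfGapIntegral ξ ν φ =ᵐ[μ.prod μ] cdfGapIntegral η ν φ := by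
  filter_upwards [Measure.quasiMeasurePreserving_fst.ae hξη,
    Measure.quasiMeasurePreserving_snd.ae hξη] with z hz₁ hz₂
  simp only [cdfGapIntegral, hz₁, hz₂]

end CdfGap

/-- Self-equitability: If Y and X are conditionally independent
given h(X), then the sensitivity functional of the conditional distributions of
Y given h(X) equals that of Y given X. -/
theorem stmt12 {Ω : Type*} [MeasurableSpace Ω] (P : Measure Ω) [IsProbabilityMeasure P]
    (X Y : Ω → ℝ) (hX : Measurable X) (hY : Measurable Y)
    (h : ℝ → ℝ) (hh : Measurable h)
    (κ : Kernel ℝ ℝ) [IsMarkovKernel κ]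
    (hκ : ∀ A B : Set ℝ, MeasurableSet A → MeasurableSet B →
      P.map (fun ω => (X ω, Y ω)) (A ×ˢ B) = ∫⁻ x in A, κ x B ∂(P.map X))
    (κh : Kernel ℝ ℝ) [IsMarkovKernel κh]
    (hκh : ∀ A B : Set ℝ, MeasurableSet A → MeasurableSet B →
      P.map (fun ω => (h (X ω), Y ω)) (A ×ˢ B) = ∫⁻ z in A, κh z B ∂(P.map (h ∘ X)))
    (hCI : ∀ B C : Set ℝ, MeasurableSet B → MeasurableSet C →
      P[fun ω => Set.indicator B (fun _ => (1 : ℝ)) (Y ω) *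
          Set.indicator C (fun _ => (1 : ℝ)) (X ω)
        | MeasurableSpace.comap (h ∘ X) Real.measurableSpace]
      =ᵐ[P] fun ω =>
        (P[fun ω' => Set.indicator B (fun _ => (1 : ℝ)) (Y ω')
            | MeasurableSpace.comap (h ∘ X) Real.measurableSpace]) ω *
        (P[fun ω' => Set.indicator C (fun _ => (1 : ℝ)) (X ω')
            | MeasurableSpace.comap (h ∘ X) Real.measurableSpace]) ω)
    (φ : ℝ → ℝ) (hφ : ConvexOn ℝ (Set.Icc (-1 : ℝ) 1) φ) :
    ∫ z : ℝ × ℝ, (∫ y, φ ((κh z.1 (Set.Iic y)).toReal - (κh z.2 (Set.Iic y)).toReal)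
          ∂(P.map Y)) ∂((P.map (h ∘ X)).prod (P.map (h ∘ X))) =
      ∫ x : ℝ × ℝ, (∫ y, φ ((κ x.1 (Set.Iic y)).toReal - (κ x.2 (Set.Iic y)).toReal)
          ∂(P.map Y)) ∂((P.map X).prod (P.map X)) := by
  obtain ⟨ψ, hψ, hφψ⟩ := hφ.exists_measurable_eqOn_Icc
  have hκ_eq_comap : κ =ᵐ[P.map X] κh.comap h hh :=
    Kernel.ae_eq_of_compProd_eq <| (Measure.eq_compProd_of_apply_prod hκ).symm.trans <|
      map_prodMk_eq_compProd_comap_of_condIndep hX hY hh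
        (Measure.eq_compProd_of_apply_prod hκh) hCI
  change ∫ z, cdfGapIntegral κh (P.map Y) φ z ∂_ = ∫ x, cdfGapIntegral κ (P.map Y) φ x ∂_
  rw [cdfGapIntegral_congr_of_eqOn hφψ, cdfGapIntegral_congr_of_eqOn hφψ, ← Measure.map_map hh hX,
    Measure.map_prod_map _ _ hh hh, integral_map (hh.prodMap hh).aemeasurable
      (stronglyMeasurable_cdfGapIntegral hψ).aestronglyMeasurable]
  exact integral_congr_ae (cdfGapIntegral_ae_congr hκ_eq_comap).symm
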